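/- Let k ≥ 0 and let G be a simple graph having two distinct vertices x and y (which may or may not be adjacent) whose neighbourhoods coincide after removing x and y, i.e., N(x) \ {x, y} = N(y) \ {x, y}. Then G is k-11-representable if and only if the induced subgraph G \ x is k-11-representable. -/

import Mathlib

/-- Number of occurrences of the consecutive pattern 11 in a word,
i.e. the number of positions `i` with `u i = u (i+1)`. -/
def pattern11Count {V : Type*} [DecidableEq V] (u : List V) : ℕ :=
  (u.zip u.tail).countP (fun p => decide (p.1 = p.2))

/-- `w` is a `k`-11-representant of the simple graph `G`: every vertex occurs in `w`,
and two distinct vertices are adjacent iff the subword of `w` induced by them contains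
at most `k` occurrences of the consecutive pattern 11. -/
def IsK11Rep {V : Type*} [DecidableEq V] (G : SimpleGraph V) (k : ℕ) (w : List V) : Prop :=
  (∀ v : V, v ∈ w) ∧
  ∀ x y : V, x ≠ y →
    (G.Adj x y ↔ pattern11Count (w.filter (fun a => decide (a = x ∨ a = y))) ≤ k)

/-- A simple graph is `k`-11-representable if it has a `k`-11-representant. -/
def K11Representable {V : Type*} [DecidableEq V] (G : SimpleGraph V) (k : ℕ) : Prop :=
  ∃ w : List V, IsK11Rep G k w

/-- A graph is `t`-uniformly `k`-11-representable if it has a `k`-11-representant in which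
every vertex occurs exactly `t` times. -/
def UniformK11Rep {V : Type*} [DecidableEq V] (G : SimpleGraph V) (t k : ℕ) : Prop :=
  ∃ w : List V, IsK11Rep G k w ∧ ∀ v : V, w.count v = t

/-- The final permutation `σ(w)`: distinct letters of `w` in order of last occurrence. -/
def finalPerm {V : Type*} [DecidableEq V] (w : List V) : List V := w.dedup

/-- The initial permutation `π(w)`: distinct letters of `w` in order of first occurrence. -/
def initPerm {V : Type*} [DecidableEq V] (w : List V) : List V := (w.reverse.dedup).reverse

/-! Restricting a representant of `G` to the letters other than `x` represents `G \ x`.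
Conversely, let `u` be a representant of `G \ x`, read as a word over `V`. Appending `u.dedup`
to `u` adds no factor `11` to any `u|_{a,b}`: the appended part of `u|_{a,b}` is `a b` or `b a`,
ending with the letter that ends `u|_{a,b}`. So we may assume that `y` occurs at least `k + 2`
times. Now replace every `y` by a block `x y` or `y x` to get a word `w`. For
`z ≠ x, y` the word `w|_{x,z}` is `u|_{y,z}` with `y` renamed to `x`, so the twin hypothesis
gives the right answer. Using only blocks `x y` gives `w|_{x,y} = (x y)^m`, with no factor `11`;
alternating `x y` and `y x` gives `m - 1 > k` of them. -/

lemma List.Nodup.head?_ne_getLast? {V : Type*} {l : List V} (hl : l.Nodup) {a b : V}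
    (ha : a ∈ l) (hb : b ∈ l) (hab : a ≠ b) : l.head? ≠ l.getLast? := by
  obtain _ | ⟨c, t⟩ := l
  · simp at ha
  have ht : t ≠ [] := by
    rintro rfl
    simp_all
  rw [List.head?_cons, List.getLast?_cons, List.getLast?_eq_some_getLast ht]
  intro h
  exact (List.nodup_cons.1 hl).1 (Option.some.inj h ▸ List.getLast_mem ht)

section
variable {V : Type*} [DecidableEq V]

@[simp]
lemma pattern11Count_nil : pattern11Count ([] : List V) = 0 := rfl

lemma pattern11Count_cons (a : V) (l : List V) :
    pattern11Count (a :: l) = pattern11Count l + if l.head? = some a then 1 else 0 := by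
  cases l with
  | nil => rfl
  | cons b l =>
    simp only [pattern11Count, List.tail_cons, List.zip_cons_cons, List.countP_cons,
      List.head?_cons, Option.some.injEq, eq_comm (a := b)]
    simp

lemma pattern11Count_append (l m : List V) :
    pattern11Count (l ++ m) =
      pattern11Count l + pattern11Count m + if m ≠ [] ∧ l.getLast? = m.head? then 1 else 0 := by
  induction l with
  | nil => cases m <;> simp
  | cons a t ih =>
    rw [List.cons_append, pattern11Count_cons, ih, pattern11Count_cons]
    rcases t with _ | ⟨b, t⟩
    · cases m <;> simp [eq_comm]
    · simp only [List.cons_append, List.head?_cons, List.getLast?_cons_cons,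
        Option.some.injEq]
      omega

lemma pattern11Count_append_of_getLast?_ne {l m : List V} (h : l.getLast? ≠ m.head?) :
    pattern11Count (l ++ m) = pattern11Count l + pattern11Count m := by
  simp [pattern11Count_append, h]

lemma pattern11Count_eq_zero_of_nodup {l : List V} (h : l.Nodup) : pattern11Count l = 0 := by
  induction l with
  | nil => rfl
  | cons a t ih =>
    rw [List.nodup_cons] at h
    rw [pattern11Count_cons, ih h.2, if_neg]
    exact fun ht => h.1 (List.mem_of_mem_head? ht)

lemma pattern11Count_map {W : Type*} [DecidableEq W] {f : V → W} {l : List V}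
    (hf : Set.InjOn f {a | a ∈ l}) : pattern11Count (l.map f) = pattern11Count l := by
  rw [pattern11Count, pattern11Count, ← List.map_tail, List.zip_map, List.countP_map]
  refine List.countP_congr fun p hp => ?_
  have ⟨h1, h2⟩ := List.of_mem_zip hp
  simpa using hf.eq_iff h1 (List.mem_of_mem_tail h2)

/-- The induced subword `w|_{a,b}`. -/
def restrictPair (w : List V) (a b : V) : List V := w.filter fun c => c = a ∨ c = b

lemma isK11Rep_iff {G : SimpleGraph V} {k : ℕ} {w : List V} :
    IsK11Rep G k w ↔ (∀ v, v ∈ w) ∧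
      ∀ a b, a ≠ b → (G.Adj a b ↔ pattern11Count (restrictPair w a b) ≤ k) := Iff.rfl

lemma restrictPair_cons (c : V) (w : List V) (a b : V) :
    restrictPair (c :: w) a b =
      if c = a ∨ c = b then c :: restrictPair w a b else restrictPair w a b := by
  simp [restrictPair, List.filter_cons]

lemma restrictPair_append (w w' : List V) (a b : V) :
    restrictPair (w ++ w') a b = restrictPair w a b ++ restrictPair w' a b :=
  List.filter_append ..

lemma restrictPair_comm (w : List V) (a b : V) : restrictPair w a b = restrictPair w b a :=
  List.filter_congr fun _ _ => by simp [or_comm]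

lemma mem_restrictPair {w : List V} {a b c : V} :
    c ∈ restrictPair w a b ↔ c ∈ w ∧ (c = a ∨ c = b) := by
  simp [restrictPair]

lemma List.getLast?_dedup (l : List V) : l.dedup.getLast? = l.getLast? := by
  induction l with
  | nil => rfl
  | cons a l ih =>
    by_cases ha : a ∈ l
    · rw [List.dedup_cons_of_mem ha, ih, List.getLast?_cons, List.getLast?_eq_some_getLast
        (List.ne_nil_of_mem ha)]
      rfl
    · rw [List.dedup_cons_of_notMem ha, List.getLast?_cons, List.getLast?_cons, ih]

lemma List.filter_dedup (p : V → Bool) (l : List V) :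
    l.dedup.filter p = (l.filter p).dedup := by
  induction l with
  | nil => rfl
  | cons a l ih =>
    by_cases hpa : p a
    · by_cases ha : a ∈ l
      · rw [List.dedup_cons_of_mem ha, List.filter_cons_of_pos hpa,
          List.dedup_cons_of_mem (List.mem_filter.2 ⟨ha, hpa⟩), ih]
      · rw [List.dedup_cons_of_notMem ha, List.filter_cons_of_pos hpa,
          List.filter_cons_of_pos hpa,
          List.dedup_cons_of_notMem fun h => ha (List.mem_of_mem_filter h), ih]
    · rw [List.filter_cons_of_neg hpa]
      by_cases ha : a ∈ l
      · rw [List.dedup_cons_of_mem ha, ih]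
      · rw [List.dedup_cons_of_notMem ha, List.filter_cons_of_neg hpa, ih]

lemma restrictPair_dedup (w : List V) (a b : V) :
    restrictPair w.dedup a b = (restrictPair w a b).dedup :=
  List.filter_dedup ..

lemma pattern11Count_append_dedup {r : List V} {a b : V} (ha : a ∈ r) (hb : b ∈ r)
    (hab : a ≠ b) :
    pattern11Count (r ++ r.dedup) = pattern11Count r := by
  have hd := List.nodup_dedup r
  rw [pattern11Count_append_of_getLast?_ne, pattern11Count_eq_zero_of_nodup hd, add_zero]
  rw [← List.getLast?_dedup]
  exact (hd.head?_ne_getLast? (List.mem_dedup.2 ha) (List.mem_dedup.2 hb) hab).symm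

lemma exists_pad (u : List V) (n : ℕ) : ∃ u' : List V, (∀ v, v ∈ u' ↔ v ∈ u) ∧
    (∀ v ∈ u, n ≤ u'.count v) ∧
    ∀ a ∈ u, ∀ b ∈ u, a ≠ b →
      pattern11Count (restrictPair u' a b) = pattern11Count (restrictPair u a b) := by
  induction n with
  | zero => exact ⟨u, fun _ => Iff.rfl, fun _ _ => Nat.zero_le _, fun _ _ _ _ _ => rfl⟩
  | succ n ih =>
    obtain ⟨u', hmem, hcount, hpair⟩ := ih
    refine ⟨u' ++ u'.dedup, fun v => by simp [hmem], fun v hv => ?_, fun a ha b hb hab => ?_⟩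
    · have := hcount v hv
      simp [List.count_dedup, (hmem v).2 hv]
      omega
    · rw [restrictPair_append, restrictPair_dedup,
        pattern11Count_append_dedup (a := a) (b := b) _ _ hab, hpair a ha b hb hab]
      · exact mem_restrictPair.2 ⟨(hmem a).2 ha, .inl rfl⟩
      · exact mem_restrictPair.2 ⟨(hmem b).2 hb, .inr rfl⟩

section Twin
variable (x y : V) (f : Bool → Bool)

def twinBlock : Bool → List V
  | true => [x, y]
  | false => [y, x]

def insertTwin : Bool → List V → List V
  | _, [] => []
  | b, v :: l =>
    if v = y then twinBlock x y b ++ insertTwin (f b) l else v :: insertTwin b l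

def twinWord : Bool → ℕ → List V
  | _, 0 => []
  | b, m + 1 => twinBlock x y b ++ twinWord (f b) m

variable {x y f}

lemma mem_insertTwin {v : V} {b : Bool} {u : List V} :
    v ∈ insertTwin x y f b u ↔ v ∈ u ∨ v = x ∧ y ∈ u := by
  induction u generalizing b with
  | nil => simp [insertTwin]
  | cons c l ih =>
    by_cases hc : c = y
    · subst hc
      cases b <;> simp [insertTwin, twinBlock, ih] <;> tauto
    · simp [insertTwin, hc, ih]
      tauto

lemma restrictPair_insertTwin_of_ne {a b : V} (ha : a ≠ x) (hb : b ≠ x) (c : Bool)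
    (u : List V) :
    restrictPair (insertTwin x y f c u) a b = restrictPair u a b := by
  induction u generalizing c with
  | nil => rfl
  | cons v l ih =>
    by_cases hv : v = y
    · subst hv
      cases c <;> simp [insertTwin, twinBlock, restrictPair_cons, ha.symm, hb.symm, ih]
    · simp [insertTwin, hv, restrictPair_cons, ih]

lemma restrictPair_insertTwin_twin_left {z : V} (hzx : z ≠ x) (hzy : z ≠ y) (hxy : x ≠ y)
    (b : Bool) {u : List V} (hxu : x ∉ u) :
    restrictPair (insertTwin x y f b u) x z =
      (restrictPair u y z).map fun v => if v = y then x else v := by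
  induction u generalizing b with
  | nil => rfl
  | cons c l ih =>
    rw [List.mem_cons, not_or] at hxu
    by_cases hc : c = y
    · subst hc
      cases b <;> simp [insertTwin, twinBlock, restrictPair_cons,
        hzx.symm, hzy.symm, hxy.symm, ih _ hxu.2]
    · by_cases hcz : c = z
      · subst hcz
        simp [insertTwin, restrictPair_cons, hc, ih _ hxu.2]
      · simp [insertTwin, restrictPair_cons, hc, hcz, Ne.symm hxu.1, ih _ hxu.2]

lemma pattern11Count_restrictPair_insertTwin_twin_left {z : V} (hzx : z ≠ x) (hzy : z ≠ y)
    (hxy : x ≠ y) (b : Bool) {u : List V} (hxu : x ∉ u) :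
    pattern11Count (restrictPair (insertTwin x y f b u) x z) =
      pattern11Count (restrictPair u y z) := by
  rw [restrictPair_insertTwin_twin_left hzx hzy hxy b hxu, pattern11Count_map]
  intro v hv w hw hvw
  simp only [Set.mem_ofPred_eq, mem_restrictPair] at hv hw
  rcases hv.2 with rfl | rfl <;> rcases hw.2 with rfl | rfl <;> simp_all [eq_comm]

lemma restrictPair_insertTwin_twin (b : Bool) {u : List V} (hxu : x ∉ u) :
    restrictPair (insertTwin x y f b u) x y = twinWord x y f b (u.count y) := by
  induction u generalizing b with
  | nil => rfl
  | cons c l ih =>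
    rw [List.mem_cons, not_or] at hxu
    by_cases hc : c = y
    · subst hc
      cases b <;> simp [insertTwin, twinBlock, twinWord, restrictPair_cons,
        ih _ hxu.2]
    · simp [insertTwin, restrictPair_cons, hc, Ne.symm hxu.1, ih _ hxu.2]

lemma pattern11Count_twinBlock (hxy : x ≠ y) (b : Bool) :
    pattern11Count (twinBlock x y b) = 0 :=
  pattern11Count_eq_zero_of_nodup (by cases b <;> simp [twinBlock, hxy, hxy.symm])

lemma pattern11Count_twinWord_id (hxy : x ≠ y) (b : Bool) (m : ℕ) :
    pattern11Count (twinWord x y id b m) = 0 := by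
  induction m with
  | zero => rfl
  | succ m ih =>
    rw [twinWord, pattern11Count_append, pattern11Count_twinBlock hxy, id, ih]
    cases m <;> cases b <;> simp [twinWord, twinBlock, hxy, hxy.symm]

lemma pattern11Count_twinWord_not (hxy : x ≠ y) (b : Bool) (m : ℕ) :
    pattern11Count (twinWord x y not b (m + 1)) = m := by
  induction m generalizing b with
  | zero => simpa [twinWord] using pattern11Count_twinBlock hxy b
  | succ m ih =>
    rw [twinWord, pattern11Count_append, pattern11Count_twinBlock hxy, ih]
    cases b <;> simp [twinWord, twinBlock]

lemma pattern11Count_twinWord_le_iff (hxy : x ≠ y) (P : Prop) [Decidable P] (b : Bool)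
    {k m : ℕ} (hm : k + 2 ≤ m) :
    pattern11Count (twinWord x y (if P then id else not) b m) ≤ k ↔ P := by
  split_ifs with hP
  · simp [hP, pattern11Count_twinWord_id hxy]
  · obtain ⟨m, rfl⟩ : ∃ m', m = m' + 1 := ⟨m - 1, by omega⟩
    rw [pattern11Count_twinWord_not hxy]
    simp only [hP, iff_false]
    omega

end Twin

variable {G : SimpleGraph V} {k : ℕ}

lemma restrictPair_filter {p : V → Bool} {a b : V} (ha : p a) (hb : p b) (w : List V) :
    restrictPair (w.filter p) a b = restrictPair w a b := by
  rw [restrictPair, restrictPair, List.filter_filter]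
  refine List.filter_congr fun c _ => ?_
  by_cases hc : c = a ∨ c = b
  · rcases hc with rfl | rfl <;> simp [ha, hb]
  · simp [hc]

lemma pattern11Count_restrictPair_map_val {S : Set V} (w : List S) (a b : S) :
    pattern11Count (restrictPair (w.map Subtype.val) a b) =
      pattern11Count (restrictPair w a b) := by
  rw [restrictPair, List.filter_map, pattern11Count_map Subtype.val_injective.injOn, restrictPair]
  congr 1
  exact List.filter_congr fun c _ => by simp [Subtype.ext_iff]

theorem K11Representable.induce (S : Set V) (h : K11Representable G k) :
    K11Representable (G.induce S) k := by
  classical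
  obtain ⟨w, hw⟩ := h
  obtain ⟨hmem, hadj⟩ := isK11Rep_iff.1 hw
  let w' : List S := w.filterMap fun v => if hv : v ∈ S then some ⟨v, hv⟩ else none
  have hw' : w'.map Subtype.val = w.filter (· ∈ S) := by
    simp [w', List.map_filterMap, ← List.filterMap_eq_filter, Option.guard]
  refine ⟨w', isK11Rep_iff.2 ⟨fun v => ?_, fun a b hab => ?_⟩⟩
  · simp [w', hmem]
  · rw [SimpleGraph.induce_adj, hadj a b (Subtype.val_injective.ne hab),
      ← pattern11Count_restrictPair_map_val, hw', restrictPair_filter (by simp) (by simp)]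

def IsK11RepOn (G : SimpleGraph V) (k : ℕ) (S : Set V) (u : List V) : Prop :=
  (∀ v, v ∈ u ↔ v ∈ S) ∧
    ∀ a ∈ S, ∀ b ∈ S, a ≠ b → (G.Adj a b ↔ pattern11Count (restrictPair u a b) ≤ k)

lemma K11Representable.exists_isK11RepOn {S : Set V} (h : K11Representable (G.induce S) k) :
    ∃ u, IsK11RepOn G k S u := by
  obtain ⟨w, hw⟩ := h
  obtain ⟨hmem, hadj⟩ := isK11Rep_iff.1 hw
  refine ⟨w.map Subtype.val, fun v => ⟨?_, fun hv => List.mem_map_of_mem (hmem ⟨v, hv⟩)⟩,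
    fun a ha b hb hab => ?_⟩
  · intro hv
    obtain ⟨c, -, rfl⟩ := List.mem_map.1 hv
    exact c.2
  · rw [pattern11Count_restrictPair_map_val w ⟨a, ha⟩ ⟨b, hb⟩]
    exact hadj ⟨a, ha⟩ ⟨b, hb⟩ (by simpa using hab)

lemma IsK11RepOn.exists_le_count {S : Set V} {u : List V} (h : IsK11RepOn G k S u) (n : ℕ) :
    ∃ u', IsK11RepOn G k S u' ∧ ∀ v ∈ S, n ≤ u'.count v := by
  obtain ⟨u', hmem, hcount, hpair⟩ := exists_pad u n
  refine ⟨u', ⟨fun v => (hmem v).trans (h.1 v), fun a ha b hb hab => ?_⟩,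
    fun v hv => hcount v ((h.1 v).2 hv)⟩
  rw [hpair a ((h.1 a).2 ha) b ((h.1 b).2 hb) hab]
  exact h.2 a ha b hb hab

open Classical in
lemma IsK11RepOn.isK11Rep_insertTwin {x y : V} {u : List V} (h : IsK11RepOn G k {v | v ≠ x} u)
    (hxy : x ≠ y) (hN : ∀ z, z ≠ x → z ≠ y → (G.Adj x z ↔ G.Adj y z))
    (hcount : k + 2 ≤ u.count y) :
    IsK11Rep G k (insertTwin x y (if G.Adj x y then id else not) true u) := by
  obtain ⟨hmem, hadj⟩ := h
  simp only [Set.mem_ofPred_eq] at hmem hadj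
  have hxu : x ∉ u := fun hx => (hmem x).1 hx rfl
  set f : Bool → Bool := if G.Adj x y then id else not with hf
  have hx : ∀ z, z ≠ x →
      (G.Adj x z ↔ pattern11Count (restrictPair (insertTwin x y f true u) x z) ≤ k) := by
    intro z hzx
    by_cases hzy : z = y
    · rw [hzy, restrictPair_insertTwin_twin _ hxu, hf,
        pattern11Count_twinWord_le_iff hxy _ _ hcount]
    · rw [pattern11Count_restrictPair_insertTwin_twin_left hzx hzy hxy _ hxu, hN z hzx hzy]
      exact hadj y hxy.symm z hzx (Ne.symm hzy)
  refine isK11Rep_iff.2 ⟨fun v => mem_insertTwin.2 ?_, fun a b hab => ?_⟩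
  · by_cases hv : v = x
    · exact .inr ⟨hv, (hmem y).2 hxy.symm⟩
    · exact .inl ((hmem v).2 hv)
  by_cases ha : a = x
  · exact ha ▸ hx b (ha ▸ Ne.symm hab)
  by_cases hb : b = x
  · rw [hb, G.adj_comm, restrictPair_comm]
    exact hx a ha
  rw [restrictPair_insertTwin_of_ne ha hb]
  exact hadj a ha b hb hab

end

theorem k11Representable_twin_general {V : Type*} [DecidableEq V] (k : ℕ)
    (G : SimpleGraph V) (x y : V) (hne : x ≠ y)
    (hN : ∀ z : V, z ≠ x → z ≠ y → (G.Adj x z ↔ G.Adj y z)) :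
    K11Representable G k ↔ K11Representable (G.induce {u : V | u ≠ x}) k := by
  refine ⟨K11Representable.induce _, fun h => ?_⟩
  obtain ⟨u, hu⟩ := h.exists_isK11RepOn
  obtain ⟨u', hu', hcount⟩ := hu.exists_le_count (k + 2)
  exact ⟨_, hu'.isK11Rep_insertTwin hne hN (hcount y hne.symm)⟩

/-- if two distinct vertices `x` and `y` (possibly adjacent) have the same
neighbourhoods up to removing `x` and `y`, then `G` is `k`-11-representable iff
`G \ x` is `k`-11-representable. -/
theorem k11Representable_twin {V : Type*} [DecidableEq V] [Fintype V] (k : ℕ)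
    (G : SimpleGraph V) (x y : V) (hne : x ≠ y)
    (hN : ∀ z : V, z ≠ x → z ≠ y → (G.Adj x z ↔ G.Adj y z)) :
    K11Representable G k ↔ K11Representable (G.induce {u : V | u ≠ x}) k :=
  k11Representable_twin_general k G x y hne hN
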